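/- Let p be a prime, let χ1 be a nontrivial Dirichlet character modulo p, and let α, β be integers with p ∤ α·β. For a function F : ℤ/pℤ → ℂ, write F̂(t) = p^{-1/2} Σ_{a (mod p)} F(a)·e(a·t/p). Then the Fourier transform of v ↦ L_{α,β}(v; p) satisfies, for every integer t, L̂_{α,β}(t) = (p^{1/2}/τ(χ1)) · χ1(inv(β)·t) · Kl2(α·inv(β)·t; p), where inv(β) is the inverse of β modulo p and χ1(x) = 0 when p | x. -/

import Mathlib

/-! Substituting `c = b + β a` in the double sum defining `L̂_{α,β}(t)` separates the variables:
with `u = t/β`, it becomes the twisted Gauss sum `∑_b χ̄(b) e(-ub/p) = p χ(u) / τ(χ)` times the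
Kloosterman sum `∑_{c ≠ 0} e((α/c + uc)/p)`. When `u ≠ 0`, the map `c ↦ (uc, α/c)` identifies
the latter with the sum over `x₁ x₂ = αu` defining `Kl2`; when `u = 0`, the factor `χ(u)`
vanishes. -/

open Finset

/-- `eR x = exp(2πi·x)`. -/
noncomputable def eR (x : ℝ) : ℂ := Complex.exp (2 * Real.pi * Complex.I * x)

/-- `eZMod c x = e(x/c)` for a residue `x` mod `c`. -/
noncomputable def eZMod (c : ℕ) (x : ZMod c) : ℂ := eR ((x.val : ℝ) / c)

/-- Kloosterman sum `S(a, b; c)`. -/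
noncomputable def kloos (a b : ℤ) (c : ℕ) : ℂ :=
  ∑ d ∈ (Finset.range c).filter (fun d => Nat.Coprime d c),
    eZMod c ((a : ZMod c) * (d : ZMod c) + (b : ZMod c) * ((d : ZMod c))⁻¹)

/-- Normalized Kloosterman sum `Kl2(n; p)`. -/
noncomputable def Kl2 (p : ℕ) (n : ZMod p) : ℂ :=
  ((1 / Real.sqrt p : ℝ) : ℂ) *
    ∑ x1 ∈ Finset.range p, ∑ x2 ∈ Finset.range p,
      if (x1 : ZMod p) * (x2 : ZMod p) = n then eR (((x1 : ℝ) + (x2 : ℝ)) / p) else 0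

/-- Gauss sum `τ(χ)` of a Dirichlet character mod `q`. -/
noncomputable def gauss (q : ℕ) (χ : DirichletCharacter ℂ q) : ℂ :=
  ∑ a ∈ Finset.range q, χ (a : ZMod q) * eZMod q (a : ZMod q)

/-- The sum `L_{α,β}(v; p)` attached to a Dirichlet character mod `p`. -/
noncomputable def Lab (p : ℕ) (χ : DirichletCharacter ℂ p) (α β v : ZMod p) : ℂ :=
  ((1 / Real.sqrt p : ℝ) : ℂ) *
    ∑ b ∈ Finset.range p,
      if Nat.Coprime (((b : ZMod p) + β * v).val) p
      then (starRingEnd ℂ) (χ (b : ZMod p)) * eZMod p (α * ((b : ZMod p) + β * v)⁻¹)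
      else 0

/-- The character sum `𝔅(n1, n2, m; q)` (with parameters `r, M1, M2`). -/
noncomputable def frakB (r M1 M2 n1 : ℕ) (n2 m : ℤ) (q : ℕ) : ℂ :=
  ∑ d ∈ q.divisors, (d : ℂ) * ((ArithmeticFunction.moebius (q / d) : ℤ) : ℂ) *
    ∑ u ∈ (Finset.range (q * r / n1)).filter (fun u => Nat.Coprime u (q * r / n1)),
      if (m : ZMod d) = ((M2 ^ 2 * n1 * u : ℕ) : ZMod d)
      then eZMod (q * r / n1)
        ((n2 : ZMod (q * r / n1)) * ((M1 : ZMod (q * r / n1)) * (u : ZMod (q * r / n1)))⁻¹)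
      else 0

/-- The character sum `𝔇(n1, n2, m, q; M1)` (with parameters `r, M2, χ1`). -/
noncomputable def frakD (M1 M2 q r n1 : ℕ) (χ1 : DirichletCharacter ℂ M1) (n2 m : ℤ) : ℂ :=
  ∑ a ∈ (Finset.range M1).filter (fun a => Nat.Coprime a M1),
    Lab M1 χ1 ((m : ZMod M1) * ((q : ZMod M1) * (M2 : ZMod M1))⁻¹) (M2 : ZMod M1) (a : ZMod M1) *
    Kl2 M1 (-(r : ZMod M1) * (n2 : ZMod M1) *
      ((a : ZMod M1) * (((q * r / n1 : ℕ)) : ZMod M1) ^ 2)⁻¹)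

open AddChar

noncomputable section

variable {F R : Type*} [Field F] [Fintype F] [CommRing R]

theorem gaussSum_inv_mulShift_inv_mul_gaussSum [IsDomain R] {χ : MulChar F R} (hχ : χ ≠ 1)
    {ψ : AddChar F R} (hψ : ψ.IsPrimitive) (u : F) :
    gaussSum χ⁻¹ (mulShift ψ⁻¹ u) * gaussSum χ ψ = Fintype.card F * χ u := by
  rcases eq_or_ne u 0 with rfl | hu
  · have hχinv : χ⁻¹ ≠ 1 := by rwa [ne_eq, inv_eq_one]
    simp [gaussSum, MulChar.sum_eq_zero_of_ne_one hχinv, MulChar.map_zero]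
  · have hshift := gaussSum_mulShift_eq χ⁻¹ ψ⁻¹ (Units.mk0 u hu)
    rw [Units.val_mk0, inv_inv] at hshift
    rw [hshift, mul_assoc, mul_comm (gaussSum χ⁻¹ ψ⁻¹), gaussSum_mul_gaussSum_eq_card hχ hψ,
      mul_comm]

variable [DecidableEq F]

def kloostermanSum (ψ : AddChar F R) (a b : F) : R :=
  ∑ c, if c ≠ 0 then ψ (a * c⁻¹ + b * c) else 0

/-- `p^{1/2} L_{α,β}(v; p)`, with `χ⁻¹` in place of `conj χ`. -/
def shiftedCharSum (χ : MulChar F R) (ψ : AddChar F R) (α β v : F) : R :=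
  ∑ b, if b + β * v ≠ 0 then χ⁻¹ b * ψ (α * (b + β * v)⁻¹) else 0

theorem kloostermanSum_eq_sum_mul_eq (ψ : AddChar F R) {a b : F} (ha : a ≠ 0) (hb : b ≠ 0) :
    kloostermanSum ψ a b = ∑ x, ∑ y, if x * y = a * b then ψ x * ψ y else 0 := by
  have inner (x : F) : (∑ y, if x * y = a * b then ψ x * ψ y else 0)
      = if x ≠ 0 then ψ (x + x⁻¹ * (a * b)) else 0 := by
    rcases eq_or_ne x 0 with rfl | hx
    · simp [(mul_ne_zero ha hb).symm]
    · simp_rw [← eq_inv_mul_iff_mul_eq₀ hx, Finset.sum_ite_eq', Finset.mem_univ, if_true,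
        if_pos hx, map_add_eq_mul]
  simp_rw [inner]
  refine Fintype.sum_bijective (b * ·) (mulLeft_bijective₀ b hb) _ _ fun c ↦ ?_
  rcases eq_or_ne c 0 with rfl | hc
  · simp
  · rw [if_pos hc, if_pos (mul_ne_zero hb hc)]
    congr 1
    field_simp
    ring

/-- The substitution `c = b + β a` separates the variables. -/
theorem sum_shifted_inv_mul_addChar (ψ : AddChar F R) (f : F → R) (α : F) {β : F}
    (hβ : β ≠ 0) (t : F) :
    ∑ a, (∑ b, if b + β * a ≠ 0 then f b * ψ (α * (b + β * a)⁻¹) else 0) * ψ (a * t)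
      = (∑ b, f b * ψ (-(β⁻¹ * t * b))) * kloostermanSum ψ α (β⁻¹ * t) := by
  rw [kloostermanSum, Finset.sum_mul_sum]
  simp_rw [Finset.sum_mul]
  rw [Finset.sum_comm]
  refine Finset.sum_congr rfl fun b _ ↦ ?_
  refine Fintype.sum_bijective (b + β * ·)
    ((Equiv.addLeft b).bijective.comp (mulLeft_bijective₀ β hβ)) _ _ fun a ↦ ?_
  split_ifs with h
  · have hexp : -(β⁻¹ * t * b) + (α * (b + β * a)⁻¹ + β⁻¹ * t * (b + β * a))
        = α * (b + β * a)⁻¹ + a * t := by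
      field_simp
      ring
    rw [mul_assoc, mul_assoc, ← map_add_eq_mul, ← map_add_eq_mul, hexp]
  · simp

theorem sum_shiftedCharSum_mul_addChar_mul_gaussSum [IsDomain R] {χ : MulChar F R} (hχ : χ ≠ 1)
    {ψ : AddChar F R} (hψ : ψ.IsPrimitive) {α β : F} (hα : α ≠ 0) (hβ : β ≠ 0) (t : F) :
    (∑ a, shiftedCharSum χ ψ α β a * ψ (a * t)) * gaussSum χ ψ
      = Fintype.card F * χ (β⁻¹ * t) *
          ∑ x, ∑ y, if x * y = α * β⁻¹ * t then ψ x * ψ y else 0 := by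
  have htwist : ∑ b, χ⁻¹ b * ψ (-(β⁻¹ * t * b)) = gaussSum χ⁻¹ (mulShift ψ⁻¹ (β⁻¹ * t)) := by
    simp [gaussSum, mulShift_apply]
  simp only [shiftedCharSum]
  rw [sum_shifted_inv_mul_addChar ψ (fun b ↦ χ⁻¹ b) α hβ t, htwist, mul_right_comm,
    gaussSum_inv_mulShift_inv_mul_gaussSum hχ hψ]
  rcases eq_or_ne (β⁻¹ * t) 0 with hu | hu
  · simp [hu, MulChar.map_zero]
  · rw [kloostermanSum_eq_sum_mul_eq ψ hα hu, mul_assoc α]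

end

section

variable {p : ℕ}

theorem eR_natCast_div [NeZero p] (n : ℕ) : eR (n / p) = ZMod.stdAddChar (n : ZMod p) := by
  have h := ZMod.stdAddChar_coe (N := p) n
  push_cast at h
  rw [h, eR]
  congr 1
  push_cast
  ring

theorem eZMod_eq_stdAddChar [NeZero p] (x : ZMod p) : eZMod p x = ZMod.stdAddChar x := by
  rw [eZMod, eR_natCast_div, ZMod.natCast_zmod_val]

theorem sum_range_eq_sum_zmod_val [NeZero p] {M : Type*} [AddCommMonoid M] (g : ℕ → M) :
    ∑ a ∈ Finset.range p, g a = ∑ a : ZMod p, g a.val :=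
  Finset.sum_nbij' (↑) ZMod.val (fun _ _ ↦ Finset.mem_univ _)
    (fun a _ ↦ Finset.mem_range.mpr (ZMod.val_lt a))
    (fun _ ha ↦ ZMod.val_natCast_of_lt (Finset.mem_range.mp ha))
    (fun a _ ↦ ZMod.natCast_zmod_val a)
    (fun _ ha ↦ by rw [ZMod.val_natCast_of_lt (Finset.mem_range.mp ha)])

theorem coprime_val_iff_ne_zero [Fact p.Prime] (x : ZMod p) : x.val.Coprime p ↔ x ≠ 0 := by
  rw [← ZMod.isUnit_iff_coprime, ZMod.natCast_zmod_val, isUnit_iff_ne_zero]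

theorem gauss_eq_gaussSum [NeZero p] (χ : DirichletCharacter ℂ p) :
    gauss p χ = gaussSum χ ZMod.stdAddChar := by
  simp only [gauss, gaussSum, eZMod_eq_stdAddChar, sum_range_eq_sum_zmod_val, ZMod.natCast_zmod_val]

theorem Kl2_eq [NeZero p] (n : ZMod p) :
    Kl2 p n = ((1 / Real.sqrt p : ℝ) : ℂ) *
      ∑ x : ZMod p, ∑ y : ZMod p,
        if x * y = n then ZMod.stdAddChar x * ZMod.stdAddChar y else 0 := by
  have he (x y : ℕ) : eR (((x : ℝ) + (y : ℝ)) / p)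
      = ZMod.stdAddChar (x : ZMod p) * ZMod.stdAddChar (y : ZMod p) := by
    rw [← Nat.cast_add, eR_natCast_div, Nat.cast_add, map_add_eq_mul]
  simp only [Kl2, he, sum_range_eq_sum_zmod_val, ZMod.natCast_zmod_val]

theorem Lab_eq [Fact p.Prime] (χ : DirichletCharacter ℂ p) (α β v : ZMod p) :
    Lab p χ α β v = ((1 / Real.sqrt p : ℝ) : ℂ) * shiftedCharSum χ ZMod.stdAddChar α β v := by
  simp only [Lab, shiftedCharSum, coprime_val_iff_ne_zero, eZMod_eq_stdAddChar, starRingEnd_apply,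
    MulChar.star_apply', sum_range_eq_sum_zmod_val, ZMod.natCast_zmod_val]

theorem sum_Lab_mul_eZMod [Fact p.Prime] (χ : DirichletCharacter ℂ p) (α β t : ZMod p) :
    ∑ a ∈ Finset.range p, Lab p χ α β a * eZMod p (a * t)
      = ((1 / Real.sqrt p : ℝ) : ℂ) *
          ∑ a, shiftedCharSum χ ZMod.stdAddChar α β a * ZMod.stdAddChar (a * t) := by
  simp only [Lab_eq, eZMod_eq_stdAddChar, mul_assoc, ← Finset.mul_sum, sum_range_eq_sum_zmod_val,
    ZMod.natCast_zmod_val]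

end

/-- the Fourier transform of `v ↦ L_{α,β}(v; p)`. -/
theorem Lab_fourier_transform
    (p : ℕ) (hp : p.Prime) (χ1 : DirichletCharacter ℂ p) (hχ1 : χ1 ≠ 1)
    (α β : ℤ) (hαβ : ¬ ((p : ℤ) ∣ α * β)) (t : ℤ) :
    ((1 / Real.sqrt p : ℝ) : ℂ) *
      ∑ a ∈ Finset.range p,
        Lab p χ1 (α : ZMod p) (β : ZMod p) (a : ZMod p) *
          eZMod p ((a : ZMod p) * (t : ZMod p))
    = ((Real.sqrt p : ℝ) : ℂ) / gauss p χ1 *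
        χ1 (((β : ZMod p))⁻¹ * (t : ZMod p)) *
        Kl2 p ((α : ZMod p) * ((β : ZMod p))⁻¹ * (t : ZMod p)) := by
  have : Fact p.Prime := ⟨hp⟩
  have hα : (α : ZMod p) ≠ 0 := by
    rw [Ne, ZMod.intCast_zmod_eq_zero_iff_dvd]
    exact fun h ↦ hαβ (h.mul_right β)
  have hβ : (β : ZMod p) ≠ 0 := by
    rw [Ne, ZMod.intCast_zmod_eq_zero_iff_dvd]
    exact fun h ↦ hαβ (h.mul_left α)
  have hψ := ZMod.isPrimitive_stdAddChar p
  have hτ : gaussSum χ1 ZMod.stdAddChar ≠ 0 :=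
    gaussSum_ne_zero_of_nontrivial (by simp [hp.ne_zero]) hχ1 hψ
  have key := sum_shiftedCharSum_mul_addChar_mul_gaussSum hχ1 hψ hα hβ (t : ZMod p)
  have hsqrt : ((Real.sqrt p : ℝ) : ℂ) ^ 2 = p := by
    rw [← Complex.ofReal_pow, Real.sq_sqrt (Nat.cast_nonneg p), Complex.ofReal_natCast]
  rw [sum_Lab_mul_eZMod, Kl2_eq, gauss_eq_gaussSum, eq_div_of_mul_eq hτ key, ZMod.card, ← hsqrt]
  push_cast
  field_simp
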